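/- arXiv:2104.03930 — 3 statements merged into one kernel-verified Lean document; each statement's English description precedes it below -/
import Mathlib

section
/- If h₁ and h₂ are homeomorphisms of the closed ball B^n that agree on the boundary sphere S^{n-1}, then h₁ and h₂ are isotopic via an isotopy that fixes S^{n-1} pointwise: there exists a continuous H : B^n × [0,1] → B^n with H(·,0) = h₁, H(·,1) = h₂, each H(·,t) a homeomorphism, and H(x,t) = h₁(x) for all x ∈ S^{n-1} and all t. -/
/-!
Put `k := h₁⁻¹ ∘ h₂`; it fixes the boundary sphere. For `t ∈ (0, 1]` let `k_t` act as the
rescaled copy `x ↦ t k(x / t)` on the ball of radius `t` and as the identity outside it; set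
`k_0 := id`. Each `k_t` is a homeomorphism fixing the sphere, `k_1 = k`, and `(x, t) ↦ k_t x` is
jointly continuous: across `‖x‖ = t` because `k` fixes the unit sphere, and at `t = 0` because
`k_t` moves nothing outside the ball of radius `t`. Then `(x, t) ↦ h₁ (k_t x)` is the isotopy.
-/

open Metric Filter Topology

noncomputable section

namespace AlexanderTrick

variable {E : Type*} [NormedAddCommGroup E] [NormedSpace ℝ E]

local notation "𝔹" => closedBall (0 : E) 1

theorem inv_smul_mem_unitClosedBall {x : E} {t : ℝ} (hx : ‖x‖ ≤ t) (ht : 0 < t) :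
    t⁻¹ • x ∈ 𝔹 := by
  rw [mem_closedBall_zero_iff, norm_smul, norm_inv, Real.norm_of_nonneg ht.le,
    inv_mul_le_iff₀ ht, mul_one]
  exact hx

def unitBallRetraction (y : E) : 𝔹 :=
  ⟨(max 1 ‖y‖)⁻¹ • y, inv_smul_mem_unitClosedBall (le_max_right _ _) (lt_max_of_lt_left one_pos)⟩

theorem continuous_unitBallRetraction : Continuous (unitBallRetraction (E := E)) :=
  (((continuous_const.max continuous_norm).inv₀
    fun _ ↦ (lt_max_of_lt_left one_pos).ne').smul continuous_id).subtype_mk _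

theorem unitBallRetraction_of_norm_le {y : E} (hy : ‖y‖ ≤ 1) :
    unitBallRetraction y = ⟨y, mem_closedBall_zero_iff.mpr hy⟩ :=
  Subtype.ext <| by simp [unitBallRetraction, max_eq_left hy]

/-- The retraction is the identity wherever the first branch is taken; it only makes that branch
a globally defined continuous expression. -/
def alexanderCone (f : 𝔹 → 𝔹) (p : E × ℝ) : E :=
  if ‖p.1‖ ≤ p.2 then p.2 • (f (unitBallRetraction (p.2⁻¹ • p.1)) : E) else p.1

variable (f : closedBall (0 : E) 1 → closedBall (0 : E) 1)

theorem alexanderCone_smul (y : 𝔹) {t : ℝ} (ht : 0 < t) :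
    alexanderCone f (t • (y : E), t) = t • (f y : E) := by
  have hy : ‖(y : E)‖ ≤ 1 := mem_closedBall_zero_iff.mp y.2
  have hty : ‖t • (y : E)‖ ≤ t := by
    rw [norm_smul, Real.norm_of_nonneg ht.le]
    exact mul_le_of_le_one_right ht.le hy
  rw [alexanderCone, if_pos hty, inv_smul_smul₀ ht.ne', unitBallRetraction_of_norm_le hy]

theorem alexanderCone_of_lt {x : E} {t : ℝ} (h : t < ‖x‖) : alexanderCone f (x, t) = x :=
  if_neg h.not_ge

theorem alexanderCone_time_zero (x : E) : alexanderCone f (x, 0) = x := by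
  by_cases hx : ‖x‖ ≤ 0
  · simp [alexanderCone, norm_le_zero_iff.mp hx]
  · exact alexanderCone_of_lt f (not_le.mp hx)

theorem alexanderCone_time_one (y : 𝔹) : alexanderCone f ((y : E), 1) = (f y : E) := by
  simpa using alexanderCone_smul f y one_pos

theorem alexanderCone_mem (x : 𝔹) {t : ℝ} (ht : t ≤ 1) : alexanderCone f ((x : E), t) ∈ 𝔹 := by
  by_cases hx : ‖(x : E)‖ ≤ t
  · have ht₀ : 0 ≤ t := (norm_nonneg _).trans hx
    rw [mem_closedBall_zero_iff, alexanderCone, if_pos hx, norm_smul, Real.norm_of_nonneg ht₀]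
    exact mul_le_one₀ ht (norm_nonneg _) (mem_closedBall_zero_iff.mp (f _).2)
  · rw [alexanderCone_of_lt f (not_le.mp hx)]
    exact x.2

theorem alexanderCone_of_norm_eq_one (hfix : ∀ x : 𝔹, ‖(x : E)‖ = 1 → f x = x) {x : E}
    (hx : ‖x‖ = 1) {t : ℝ} (ht : t ≤ 1) : alexanderCone f (x, t) = x := by
  obtain ht | rfl := ht.lt_or_eq
  · exact alexanderCone_of_lt f (hx ▸ ht)
  · have hmem : x ∈ 𝔹 := mem_closedBall_zero_iff.mpr hx.le
    exact (alexanderCone_time_one f ⟨x, hmem⟩).trans (congrArg Subtype.val (hfix _ hx))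

theorem alexanderCone_leftInverse {g : 𝔹 → 𝔹} (hgf : Function.LeftInverse g f) (x : E)
    {t : ℝ} (ht : 0 ≤ t) : alexanderCone g (alexanderCone f (x, t), t) = x := by
  obtain rfl | ht := ht.eq_or_lt
  · rw [alexanderCone_time_zero, alexanderCone_time_zero]
  by_cases hx : ‖x‖ ≤ t
  · obtain ⟨y, rfl⟩ : ∃ y : 𝔹, t • (y : E) = x :=
      ⟨⟨t⁻¹ • x, inv_smul_mem_unitClosedBall hx ht⟩, smul_inv_smul₀ ht.ne' x⟩
    rw [alexanderCone_smul f y ht, alexanderCone_smul g (f y) ht, hgf y]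
  · rw [alexanderCone_of_lt f (not_le.mp hx), alexanderCone_of_lt g (not_le.mp hx)]

theorem continuous_alexanderCone (hf : Continuous f)
    (hfix : ∀ x : 𝔹, ‖(x : E)‖ = 1 → f x = x) : Continuous (alexanderCone f) := by
  set g : E → E := fun y ↦ f (unitBallRetraction y)
  have hg : Continuous g := continuous_subtype_val.comp (hf.comp continuous_unitBallRetraction)
  have hcone : Continuous fun p : E × ℝ ↦ p.2 • g (p.2⁻¹ • p.1) := by
    refine continuous_iff_continuousAt.2 fun ⟨x, t⟩ ↦ ?_
    obtain rfl | ht := eq_or_ne t 0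
    · have hg_bdd : IsBoundedUnder (· ≤ ·) (𝓝 (x, (0 : ℝ))) fun p : E × ℝ ↦ ‖g (p.2⁻¹ • p.1)‖ :=
        isBoundedUnder_of ⟨1, fun _ ↦ mem_closedBall_zero_iff.mp (f _).2⟩
      simpa [ContinuousAt] using
        (continuous_snd.tendsto' (x, (0 : ℝ)) 0 rfl).zero_smul_isBoundedUnder_le hg_bdd
    · exact continuousAt_snd.smul
        (hg.continuousAt.comp ((continuousAt_snd.inv₀ ht).smul continuousAt_fst))
  refine hcone.if_le continuous_fst (continuous_norm.comp continuous_fst) continuous_snd ?_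
  rintro ⟨x, t⟩ (h : ‖x‖ = t)
  obtain rfl | ht := ((norm_nonneg x).trans_eq h).eq_or_lt
  · simp [norm_eq_zero.mp h]
  · have hy : ‖t⁻¹ • x‖ = 1 := by
      rw [norm_smul, norm_inv, Real.norm_of_nonneg ht.le, h, inv_mul_cancel₀ ht.ne']
    change t • (f (unitBallRetraction (t⁻¹ • x)) : E) = x
    rw [unitBallRetraction_of_norm_le hy.le, hfix _ hy, smul_inv_smul₀ ht.ne']

def alexanderIsotopy (p : 𝔹 × Set.Icc (0 : ℝ) 1) : 𝔹 :=
  ⟨alexanderCone f (p.1, p.2), alexanderCone_mem f p.1 p.2.2.2⟩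

theorem continuous_alexanderIsotopy (hf : Continuous f)
    (hfix : ∀ x : 𝔹, ‖(x : E)‖ = 1 → f x = x) : Continuous (alexanderIsotopy f) :=
  ((continuous_alexanderCone f hf hfix).comp
    ((continuous_subtype_val.comp continuous_fst).prodMk
      (continuous_subtype_val.comp continuous_snd))).subtype_mk _

def alexanderIsotopyHomeomorph (k : 𝔹 ≃ₜ 𝔹) (hfix : ∀ x : 𝔹, ‖(x : E)‖ = 1 → k x = x)
    (t : Set.Icc (0 : ℝ) 1) : 𝔹 ≃ₜ 𝔹 where
  toFun x := alexanderIsotopy k (x, t)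
  invFun x := alexanderIsotopy k.symm (x, t)
  left_inv x := Subtype.ext <| alexanderCone_leftInverse k k.symm_apply_apply x t.2.1
  right_inv x := Subtype.ext <| alexanderCone_leftInverse k.symm k.apply_symm_apply x t.2.1
  continuous_toFun := (continuous_alexanderIsotopy k k.continuous hfix).comp
    (continuous_id.prodMk continuous_const)
  continuous_invFun := (continuous_alexanderIsotopy k.symm k.symm.continuous
    fun x hx ↦ k.symm_apply_eq.2 (hfix x hx).symm).comp (continuous_id.prodMk continuous_const)

end AlexanderTrick

open AlexanderTrick

/-- The Alexander Trick: two homeomorphisms of the closed unit ball `B^n` that agree on the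
boundary sphere `S^{n-1}` are isotopic via an isotopy fixing the boundary sphere pointwise. -/
theorem alexander_trick (n : ℕ)
    (h₁ h₂ : (closedBall (0 : EuclideanSpace ℝ (Fin n)) 1) ≃ₜ
      (closedBall (0 : EuclideanSpace ℝ (Fin n)) 1))
    (hbd : ∀ x : closedBall (0 : EuclideanSpace ℝ (Fin n)) 1,
      ‖(x : EuclideanSpace ℝ (Fin n))‖ = 1 → h₁ x = h₂ x) :
    ∃ H : (closedBall (0 : EuclideanSpace ℝ (Fin n)) 1) × (Set.Icc (0:ℝ) 1) →
        (closedBall (0 : EuclideanSpace ℝ (Fin n)) 1),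
      Continuous H ∧
      (∀ x, H (x, 0) = h₁ x) ∧
      (∀ x, H (x, 1) = h₂ x) ∧
      (∀ t : Set.Icc (0:ℝ) 1,
        ∃ e : (closedBall (0 : EuclideanSpace ℝ (Fin n)) 1) ≃ₜ
            (closedBall (0 : EuclideanSpace ℝ (Fin n)) 1),
          ∀ x, e x = H (x, t)) ∧
      (∀ x : closedBall (0 : EuclideanSpace ℝ (Fin n)) 1,
        ‖(x : EuclideanSpace ℝ (Fin n))‖ = 1 → ∀ t : Set.Icc (0:ℝ) 1, H (x, t) = h₁ x) := by
  set k := h₂.trans h₁.symm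
  have hfix : ∀ x : closedBall (0 : EuclideanSpace ℝ (Fin n)) 1,
      ‖(x : EuclideanSpace ℝ (Fin n))‖ = 1 → k x = x := fun x hx ↦
    h₁.symm_apply_eq.2 (hbd x hx).symm
  refine ⟨fun p ↦ h₁ (alexanderIsotopy k p), h₁.continuous.comp
    (continuous_alexanderIsotopy k k.continuous hfix), fun x ↦ ?_, fun x ↦ ?_,
    fun t ↦ ⟨(alexanderIsotopyHomeomorph k hfix t).trans h₁, fun _ ↦ rfl⟩, fun x hx t ↦ ?_⟩
  · exact congrArg h₁ (Subtype.ext (alexanderCone_time_zero k x))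
  · exact (congrArg h₁ (Subtype.ext (alexanderCone_time_one k x))).trans (h₁.apply_symm_apply _)
  · exact congrArg h₁ (Subtype.ext (alexanderCone_of_norm_eq_one k hfix hx t.2.2))
end
end

section
/- The group of orientation-preserving homeomorphisms of S^1, with the compact-open topology, deformation retracts onto the subgroup of rotations; in particular it is homotopy equivalent to S^1 and is path-connected. -/
open Real

/-- A continuous self-map of the circle is an orientation-preserving homeomorphism if it is a
homeomorphism admitting a strictly increasing lift `h̃ : ℝ → ℝ` with `h̃(x+1) = h̃(x)+1`. -/
def IsOrientationPreservingCircleHomeo (h : C(Circle, Circle)) : Prop :=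
  (∃ e : Circle ≃ₜ Circle, ∀ z, e z = h z) ∧
  ∃ ht : ℝ → ℝ, StrictMono ht ∧ (∀ x, ht (x + 1) = ht x + 1) ∧
    ∀ x : ℝ, h (Circle.exp (2 * π * x)) = Circle.exp (2 * π * ht x)

/-!
An orientation-preserving homeomorphism `h` has a strictly increasing lift `h̃` with
`h̃ (x + 1) = h̃ x + 1`. The straight-line homotopy `(1 - t) h̃ + t (h̃ 0 + ·)` stays among such
lifts and ends at a lift of the rotation by `h 1`, so it descends to a deformation retraction of
`Homeo₊(S¹)` onto the rotations. Since `h̃` is only determined up to an integer, continuity in `h`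
is obtained by writing the homotopy through the displacement `h̃ x - x - h̃ 0`, which homotopy
lifting along `x ↦ exp (2πix)` produces for all continuous `h` at once, jointly continuously.
-/

open Topology unitInterval

noncomputable section

theorem IsCoveringMap.exists_lift_of_map_zero {E X A : Type*} [TopologicalSpace E]
    [TopologicalSpace X] [TopologicalSpace A] {p : E → X} (hp : IsCoveringMap p)
    (F : C(A × ℝ, X)) (e : E) (hF : ∀ a, F (a, 0) = p e) :
    ∃ Φ : C(A × ℝ, E), p ∘ Φ = F ∧ ∀ a, Φ (a, 0) = e := by
  -- lift the homotopy `(s, a, x) ↦ F (a, s x)`, which starts at the constant map `p e`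
  let H : C(I × (A × ℝ), X) := F.comp ⟨fun q => (q.2.1, q.1 * q.2.2), by fun_prop⟩
  have H_zero : ∀ q, H (0, q) = p e := fun q => by simp [H, hF]
  let Ψ := hp.liftHomotopy H (.const _ e) H_zero
  have hΨ (q) : p (Ψ q) = H q := congr_fun (hp.liftHomotopy_lifts H _ H_zero) q
  refine ⟨Ψ.comp ⟨fun q => (1, q), by fun_prop⟩, funext fun q => by simpa [H] using hΨ (1, q),
    fun a => ?_⟩
  have hconst := hp.const_of_comp (g := fun s : I => Ψ (s, (a, 0))) (by fun_prop)
    (fun s s' => by simp only [hΨ, H]; simp [hF]) 1 0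
  exact hconst.trans (hp.liftHomotopy_zero H _ H_zero (a, 0))

theorem ContinuousMap.HomotopyEquiv.pathConnectedSpace {X Y : Type*} [TopologicalSpace X]
    [TopologicalSpace Y] [PathConnectedSpace Y] (e : ContinuousMap.HomotopyEquiv X Y) :
    PathConnectedSpace X := by
  obtain ⟨F⟩ := e.left_inv
  have joined_self (x : X) : Joined (e.invFun (e.toFun x)) x :=
    ⟨⟨⟨fun t => F (t, x), by fun_prop⟩, F.apply_zero x, F.apply_one x⟩⟩
  obtain ⟨y⟩ := PathConnectedSpace.nonempty (X := Y)
  exact ⟨⟨e.invFun y⟩, fun x x' => ((joined_self x).symm.trans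
    ((PathConnectedSpace.joined _ _).map e.invFun.continuous)).trans (joined_self x')⟩

namespace CircleDeg1Lift

def lineMap (f g : CircleDeg1Lift) (t : I) : CircleDeg1Lift where
  toFun x := (1 - t) * f x + t * g x
  monotone' _ _ hxy := add_le_add (mul_le_mul_of_nonneg_left (f.monotone hxy) (one_minus_nonneg t))
    (mul_le_mul_of_nonneg_left (g.monotone hxy) (nonneg t))
  map_add_one' x := by simp only [map_add_one]; ring

lemma lineMap_apply (f g : CircleDeg1Lift) (t : I) (x : ℝ) :
    lineMap f g t x = (1 - t) * f x + t * g x := rfl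

variable {f g : CircleDeg1Lift}

lemma strictMono_lineMap (hf : StrictMono f) (hg : StrictMono g) (t : I) :
    StrictMono (lineMap f g t) := fun x y hxy => by
  have hfxy := hf hxy
  have hgxy := hg hxy
  simp only [lineMap_apply]
  rcases t.2.2.lt_or_eq with ht | ht
  · nlinarith [t.2.1]
  · rw [ht]
    linarith

lemma continuous_lineMap (hf : Continuous f) (hg : Continuous g) (t : I) :
    Continuous (lineMap f g t) :=
  (continuous_const.mul hf).add (continuous_const.mul hg)

lemma strictMono_translate (c : ℝ) : StrictMono (translate (Multiplicative.ofAdd c)) :=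
  fun x y hxy => by simpa using hxy

lemma continuous_translate (c : ℝ) : Continuous (translate (Multiplicative.ofAdd c)) :=
  continuous_const_add c

end CircleDeg1Lift

open CircleDeg1Lift

def turn (x : ℝ) : Circle := Circle.exp (2 * π * x)

lemma isCoveringMap_turn : IsCoveringMap turn :=
  Circle.isCoveringMap_exp.comp_homeomorph (Homeomorph.mulLeft₀ (2 * π) (by positivity))

@[fun_prop]
lemma continuous_turn : Continuous turn := isCoveringMap_turn.continuous

lemma turn_surjective : Function.Surjective turn := fun z =>
  let ⟨θ, hθ⟩ := Circle.exp_surjective z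
  ⟨θ / (2 * π), by rw [turn, mul_div_cancel₀ _ (by positivity)]; exact hθ⟩

lemma isOpenQuotientMap_turn : IsOpenQuotientMap turn :=
  ⟨turn_surjective, continuous_turn, isCoveringMap_turn.isOpenMap⟩

lemma turn_zero : turn 0 = 1 := by simp [turn]

lemma turn_add (x y : ℝ) : turn (x + y) = turn x * turn y := by
  rw [turn, turn, turn, mul_add, Circle.exp_add]

lemma turn_sub (x y : ℝ) : turn (x - y) = turn x * (turn y)⁻¹ := by
  rw [turn, turn, turn, mul_sub, Circle.exp_sub, div_eq_mul_inv]

lemma turn_neg (x : ℝ) : turn (-x) = (turn x)⁻¹ := by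
  rw [turn, turn, mul_neg, Circle.exp_neg]

lemma turn_eq_turn_iff {x y : ℝ} : turn x = turn y ↔ ∃ m : ℤ, x = y + m := by
  rw [turn, turn, Circle.exp_eq_exp]
  have hπ : 2 * π ≠ 0 := by positivity
  refine exists_congr fun m => ⟨fun h => mul_left_cancel₀ hπ (by rw [h]; ring), fun h => ?_⟩
  rw [h]
  ring

lemma turn_add_int (x : ℝ) (m : ℤ) : turn (x + m) = turn x := turn_eq_turn_iff.2 ⟨m, rfl⟩

lemma exists_displacement : ∃ Φ : C(C(Circle, Circle) × ℝ, ℝ),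
    (∀ f x, turn (Φ (f, x)) = f (turn x) * (turn x)⁻¹ * (f 1)⁻¹) ∧ ∀ f, Φ (f, 0) = 0 := by
  obtain ⟨Φ, hΦ, hΦ_zero⟩ := isCoveringMap_turn.exists_lift_of_map_zero
    ⟨fun q : C(Circle, Circle) × ℝ => q.1 (turn q.2) * (turn q.2)⁻¹ * (q.1 1)⁻¹, by fun_prop⟩ 0
    fun f => by simp [turn_zero]
  exact ⟨Φ, fun f x => congr_fun hΦ (f, x), hΦ_zero⟩

def displacement : C(C(Circle, Circle) × ℝ, ℝ) := exists_displacement.choose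

lemma turn_displacement (f : C(Circle, Circle)) (x : ℝ) :
    turn (displacement (f, x)) = f (turn x) * (turn x)⁻¹ * (f 1)⁻¹ :=
  exists_displacement.choose_spec.1 f x

lemma displacement_zero (f : C(Circle, Circle)) : displacement (f, 0) = 0 :=
  exists_displacement.choose_spec.2 f

lemma displacement_eq_of_lift {f : C(Circle, Circle)} {L : ℝ → ℝ} (hL : Continuous L)
    (hfL : ∀ x, f (turn x) = turn (L x)) (x : ℝ) : displacement (f, x) = L x - x - L 0 := by
  refine congr_fun (isCoveringMap_turn.eq_of_comp_eq (g₁ := fun x => displacement (f, x))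
    (g₂ := fun x => L x - x - L 0) (by fun_prop) (by fun_prop) (funext fun x => ?_) 0
    (by simp [displacement_zero])) x
  rw [Function.comp_apply, Function.comp_apply, turn_displacement, turn_sub, turn_sub, ← hfL,
    ← hfL, turn_zero]

namespace IsOrientationPreservingCircleHomeo

variable {f : C(Circle, Circle)} (hf : IsOrientationPreservingCircleHomeo f)

def lift : CircleDeg1Lift where
  toFun := hf.2.choose
  monotone' := hf.2.choose_spec.1.monotone
  map_add_one' := hf.2.choose_spec.2.1

lemma strictMono_lift : StrictMono hf.lift := hf.2.choose_spec.1

lemma apply_turn (x : ℝ) : f (turn x) = turn (hf.lift x) := hf.2.choose_spec.2.2 x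

lemma continuous_lift : Continuous hf.lift := by
  refine hf.lift.continuous_iff_surjective.2 fun y => ?_
  obtain ⟨e, he⟩ := hf.1
  obtain ⟨x, hx⟩ := turn_surjective (e.symm (turn y))
  have hxy : turn (hf.lift x) = turn y := by
    rw [← hf.apply_turn, ← he, hx, Homeomorph.apply_symm_apply]
  obtain ⟨m, hm⟩ := turn_eq_turn_iff.1 hxy
  exact ⟨x - m, by rw [map_sub_int, hm, add_sub_cancel_right]⟩

lemma displacement_eq (x : ℝ) : displacement (f, x) = hf.lift x - x - hf.lift 0 :=
  displacement_eq_of_lift hf.continuous_lift hf.apply_turn x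

end IsOrientationPreservingCircleHomeo

lemma IsOrientationPreservingCircleHomeo.displacement_add_int {f : C(Circle, Circle)}
    (hf : IsOrientationPreservingCircleHomeo f) (x : ℝ) (m : ℤ) :
    displacement (f, x + m) = displacement (f, x) := by
  rw [hf.displacement_eq, hf.displacement_eq, map_add_int]
  ring

lemma isOrientationPreservingCircleHomeo_of_lift {f : C(Circle, Circle)} (g : CircleDeg1Lift)
    (hg : StrictMono g) (hgc : Continuous g) (hfg : ∀ x, f (turn x) = turn (g x)) :
    IsOrientationPreservingCircleHomeo f := by
  have hbij : Function.Bijective f := by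
    refine ⟨fun z z' hzz' => ?_, fun z => ?_⟩
    · obtain ⟨x, rfl⟩ := turn_surjective z
      obtain ⟨y, rfl⟩ := turn_surjective z'
      obtain ⟨m, hm⟩ := turn_eq_turn_iff.1 <| (hfg x).symm.trans (hzz'.trans (hfg y))
      rw [← g.map_add_int] at hm
      exact turn_eq_turn_iff.2 ⟨m, hg.injective hm⟩
    · obtain ⟨y, rfl⟩ := turn_surjective z
      obtain ⟨x, rfl⟩ := g.continuous_iff_surjective.1 hgc y
      exact ⟨turn x, hfg x⟩
  have hf := isHomeomorph_iff_continuous_bijective.2 ⟨f.continuous, hbij⟩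
  exact ⟨⟨hf.homeomorph f, fun _ => rfl⟩, g, hg, g.map_add_one, hfg⟩

lemma isOrientationPreservingCircleHomeo_mulLeft (w : Circle) :
    IsOrientationPreservingCircleHomeo (ContinuousMap.mulLeft w) := by
  obtain ⟨c, rfl⟩ := turn_surjective w
  exact isOrientationPreservingCircleHomeo_of_lift _ (strictMono_translate c)
    (continuous_translate c) fun x => (turn_add c x).symm

lemma displacement_mulLeft (w : Circle) (x : ℝ) :
    displacement (ContinuousMap.mulLeft w, x) = 0 := by
  obtain ⟨c, rfl⟩ := turn_surjective w
  rw [displacement_eq_of_lift (L := (c + ·)) (by fun_prop) (fun x => (turn_add c x).symm)]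
  ring

lemma isQuotientMap_prodMap_turn {X : Type*} [TopologicalSpace X] :
    IsQuotientMap ((ContinuousMap.id X).prodMap ⟨turn, continuous_turn⟩) :=
  (IsOpenQuotientMap.id.prodMap isOpenQuotientMap_turn).isQuotientMap

abbrev HomeoPlusCircle := {h : C(Circle, Circle) // IsOrientationPreservingCircleHomeo h}

namespace HomeoPlusCircle

def liftedDeformation : C((HomeoPlusCircle × I) × ℝ, Circle) :=
  ⟨fun q => q.1.1.1 (turn q.2) * turn (-(q.1.2 * displacement (q.1.1.1, q.2))), by fun_prop⟩

lemma liftedDeformation_factorsThrough : Function.FactorsThrough liftedDeformation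
    ((ContinuousMap.id (HomeoPlusCircle × I)).prodMap ⟨turn, continuous_turn⟩) := by
  rintro ⟨⟨h, t⟩, x⟩ ⟨⟨h', t'⟩, y⟩ hxy
  obtain ⟨⟨rfl, rfl⟩, hxy⟩ := Prod.ext_iff.1 hxy
  obtain ⟨m, rfl⟩ := turn_eq_turn_iff.1 hxy
  simp only [liftedDeformation, ContinuousMap.coe_mk, h.2.displacement_add_int, turn_add_int]

def deformation : C((HomeoPlusCircle × I) × Circle, Circle) :=
  isQuotientMap_prodMap_turn.lift liftedDeformation liftedDeformation_factorsThrough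

lemma deformation_apply_turn (h : HomeoPlusCircle) (t : I) (x : ℝ) :
    deformation ((h, t), turn x) = h.1 (turn x) * turn (-(t * displacement (h.1, x))) :=
  DFunLike.congr_fun (isQuotientMap_prodMap_turn.lift_comp liftedDeformation
    liftedDeformation_factorsThrough) ((h, t), x)

lemma deformation_zero (h : HomeoPlusCircle) (z : Circle) : deformation ((h, 0), z) = h.1 z := by
  obtain ⟨x, rfl⟩ := turn_surjective z
  simp [deformation_apply_turn, turn_zero]

lemma deformation_one (h : HomeoPlusCircle) (z : Circle) :
    deformation ((h, 1), z) = h.1 1 * z := by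
  obtain ⟨x, rfl⟩ := turn_surjective z
  rw [deformation_apply_turn, Set.Icc.coe_one, one_mul, turn_neg, turn_displacement,
    mul_inv_rev, mul_inv_rev, inv_inv, inv_inv, mul_comm (turn x), mul_left_comm (h.1 1),
    mul_inv_cancel_left]

lemma deformation_mulLeft (h : HomeoPlusCircle) (w : Circle) (hw : h.1 = .mulLeft w) (t : I)
    (z : Circle) :
    deformation ((h, t), z) = h.1 z := by
  obtain ⟨x, rfl⟩ := turn_surjective z
  simp [deformation_apply_turn, hw, displacement_mulLeft, turn_zero]

lemma deformation_apply_turn_eq_lineMap (h : HomeoPlusCircle) (t : I) (x : ℝ) :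
    deformation ((h, t), turn x) =
      turn (lineMap h.2.lift (translate (.ofAdd (h.2.lift 0))) t x) := by
  rw [deformation_apply_turn, h.2.apply_turn, h.2.displacement_eq, ← turn_add, lineMap_apply,
    translate_apply]
  congr 1
  ring

lemma isOrientationPreservingCircleHomeo_deformation (h : HomeoPlusCircle) (t : I) :
    IsOrientationPreservingCircleHomeo (deformation.curry (h, t)) :=
  isOrientationPreservingCircleHomeo_of_lift _
    (strictMono_lineMap h.2.strictMono_lift (strictMono_translate _) t)
    (continuous_lineMap h.2.continuous_lift (continuous_translate _) t)
    (deformation_apply_turn_eq_lineMap h t)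

def rotation : C(Circle, HomeoPlusCircle) :=
  ⟨fun w => ⟨.mulLeft w, isOrientationPreservingCircleHomeo_mulLeft w⟩,
    (ContinuousMap.continuous_of_continuous_uncurry _ continuous_mul).subtype_mk _⟩

def evalOne : C(HomeoPlusCircle, Circle) := ⟨fun h => h.1 1, by fun_prop⟩

def deformationRetraction :
    (ContinuousMap.id HomeoPlusCircle).Homotopy (rotation.comp evalOne) where
  toFun p := ⟨deformation.curry (p.2, p.1), isOrientationPreservingCircleHomeo_deformation _ _⟩
  continuous_toFun := (deformation.curry.continuous.comp continuous_swap).subtype_mk _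
  map_zero_left h := Subtype.ext <| ContinuousMap.ext (deformation_zero h)
  map_one_left h := Subtype.ext <| ContinuousMap.ext (deformation_one h)

def homotopyEquivCircle : ContinuousMap.HomotopyEquiv HomeoPlusCircle Circle where
  toFun := evalOne
  invFun := rotation
  left_inv := ⟨deformationRetraction.symm⟩
  right_inv := by
    have : evalOne.comp rotation = .id Circle := ContinuousMap.ext mul_one
    rw [this]

end HomeoPlusCircle

end

/-- Kneser's theorem in dimension 1: the group `Homeo₊(S¹)` of orientation-preserving
homeomorphisms of the circle, with the compact-open topology, deformation retracts onto the
rotations; in particular it is homotopy equivalent to `S¹` and is path-connected. -/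
theorem homeoPlusCircle_deformation_retracts_to_rotations :
    (∃ H : {h : C(Circle, Circle) // IsOrientationPreservingCircleHomeo h} →
        (Set.Icc (0:ℝ) 1) → {h : C(Circle, Circle) // IsOrientationPreservingCircleHomeo h},
      Continuous (fun p : {h : C(Circle, Circle) // IsOrientationPreservingCircleHomeo h} ×
          (Set.Icc (0:ℝ) 1) => H p.1 p.2) ∧
      (∀ h, H h 0 = h) ∧
      (∀ h, ∃ w : Circle, ∀ z, (H h 1).1 z = w * z) ∧
      (∀ h, (∃ w : Circle, ∀ z, h.1 z = w * z) → ∀ t, H h t = h)) ∧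
    Nonempty (ContinuousMap.HomotopyEquiv
      {h : C(Circle, Circle) // IsOrientationPreservingCircleHomeo h} Circle) ∧
    PathConnectedSpace {h : C(Circle, Circle) // IsOrientationPreservingCircleHomeo h} := by
  let F := HomeoPlusCircle.deformationRetraction
  refine ⟨⟨fun h t => F (t, h), F.continuous.comp continuous_swap, F.apply_zero,
      fun h => ⟨h.1 1, fun z => by simp only [F.apply_one]; rfl⟩, ?_⟩,
    ⟨HomeoPlusCircle.homotopyEquivCircle⟩, HomeoPlusCircle.homotopyEquivCircle.pathConnectedSpace⟩
  rintro h ⟨w, hw⟩ t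
  exact Subtype.ext <| ContinuousMap.ext <|
    HomeoPlusCircle.deformation_mulLeft h w (ContinuousMap.ext hw) t
end

section
/- Let f : S^n → S^n be a homeomorphism that is the identity on a nonempty open subset U. Then there is a closed embedded ball D ⊂ U (image of B^n under a chart) fixed pointwise by f, such that the closure of S^n \ D is homeomorphic to B^n, and f restricts to a homeomorphism of this complementary ball fixing its boundary; consequently f is isotopic to the identity of S^n. -/
/-!
Pick `p ∈ U` and a small closed ball `D` around `p` in the stereographic chart from `-p`, so that
`D ⊆ U`. The stereographic projections from `p` and from `-p` satisfy `‖ψₚ x‖ * ‖ψ₋ₚ x‖ = 4`, so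
the complement of `D` is an open ball in the chart from `p`, and its closure a closed ball. In that
chart `f` becomes a homeomorphism `G` of `ℝⁿ` that is the identity outside a ball, and the
Alexander isotopy `s • G (s⁻¹ • y)`, `s ∈ [0, 1]`, transported back to the sphere with `p` as a
fixed point, connects `f` to the identity.
-/

open Metric Module Set Filter Topology Function
open scoped RealInnerProductSpace

section AlexanderTrick

variable {F : Type*} [NormedAddCommGroup F]

theorem exists_forall_norm_sub_le [ProperSpace F] {h : F → F} (hh : Continuous h) {R : ℝ}
    (hR : ∀ y, R ≤ ‖y‖ → h y = y) : ∃ M, ∀ y, ‖h y - y‖ ≤ M := by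
  obtain ⟨M, hM⟩ := (isCompact_closedBall (0 : F) R).exists_bound_of_continuousOn
    (hh.sub continuous_id).continuousOn
  refine ⟨max M 0, fun y => ?_⟩
  rcases le_or_gt ‖y‖ R with hy | hy
  · exact (hM y (mem_closedBall_zero_iff.mpr hy)).trans (le_max_left _ _)
  · simp [hR y hy.le]

variable [NormedSpace ℝ F]

noncomputable def alexanderTrick (g : F ≃ₜ F) (s : ℝ) : F ≃ₜ F :=
  if hs : 0 < s then
    ((Homeomorph.smulOfNeZero s⁻¹ (inv_ne_zero hs.ne')).trans g).trans
      (Homeomorph.smulOfNeZero s hs.ne')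
  else Homeomorph.refl F

variable (g : F ≃ₜ F) {s : ℝ}

theorem alexanderTrick_apply_of_pos (hs : 0 < s) (y : F) :
    alexanderTrick g s y = s • g (s⁻¹ • y) := by
  simp [alexanderTrick, hs]

theorem alexanderTrick_of_nonpos (hs : s ≤ 0) : alexanderTrick g s = Homeomorph.refl F := by
  simp [alexanderTrick, hs.not_gt]

theorem alexanderTrick_one : alexanderTrick g 1 = g := by
  ext y
  simp [alexanderTrick_apply_of_pos g one_pos]

variable {g}

theorem alexanderTrick_apply_of_le_norm {R : ℝ} (hg : ∀ y, R ≤ ‖y‖ → g y = y) (hs : s ≤ 1)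
    {y : F} (hy : R ≤ ‖y‖) : alexanderTrick g s y = y := by
  rcases lt_or_ge 0 s with hs₀ | hs₀
  · have hRy : R ≤ ‖s⁻¹ • y‖ := by
      rw [norm_smul, Real.norm_eq_abs, abs_of_pos (inv_pos.mpr hs₀)]
      exact hy.trans (le_mul_of_one_le_left (norm_nonneg y) (one_le_inv₀ hs₀ |>.mpr hs))
    rw [alexanderTrick_apply_of_pos g hs₀, hg _ hRy, smul_inv_smul₀ hs₀.ne']
  · rw [alexanderTrick_of_nonpos g hs₀, Homeomorph.refl_apply, id]

theorem norm_alexanderTrick_sub_le {M : ℝ} (hM : ∀ z, ‖g z - z‖ ≤ M) (s : ℝ) (y : F) :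
    ‖alexanderTrick g s y - y‖ ≤ max s 0 * M := by
  rcases lt_or_ge 0 s with hs | hs
  · calc ‖alexanderTrick g s y - y‖ = s * ‖g (s⁻¹ • y) - s⁻¹ • y‖ := by
          rw [alexanderTrick_apply_of_pos g hs, ← norm_smul_of_nonneg hs.le, smul_sub,
            smul_inv_smul₀ hs.ne']
      _ ≤ max s 0 * M := by rw [max_eq_left hs.le]; gcongr; exact hM _
  · simp [alexanderTrick_of_nonpos g hs, max_eq_right hs]

/-- The Alexander isotopy is continuous at `s = 0` because `g` moves points a bounded distance,
and rescaling by `s` shrinks that displacement to `s * M`. -/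
theorem continuous_alexanderTrick {M : ℝ} (hM : ∀ z, ‖g z - z‖ ≤ M) :
    Continuous fun q : ℝ × F => alexanderTrick g q.1 q.2 := by
  refine continuous_iff_continuousAt.mpr fun ⟨s₀, y₀⟩ => ?_
  rcases lt_or_ge 0 s₀ with hs₀ | hs₀
  · have hpos : ∀ᶠ q : ℝ × F in 𝓝 (s₀, y₀), 0 < q.1 :=
      continuous_fst.continuousAt.eventually (lt_mem_nhds hs₀)
    refine ContinuousAt.congr ?_ (hpos.mono fun q hq => (alexanderTrick_apply_of_pos g hq q.2).symm)
    have hinv : ContinuousAt (fun q : ℝ × F => q.1⁻¹ • q.2) (s₀, y₀) :=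
      (continuousAt_fst.inv₀ hs₀.ne').smul continuousAt_snd
    exact continuousAt_fst.smul (g.continuous.continuousAt.comp hinv)
  · have hy₀ : alexanderTrick g s₀ y₀ = y₀ := by
      rw [alexanderTrick_of_nonpos g hs₀, Homeomorph.refl_apply, id]
    rw [ContinuousAt, hy₀, tendsto_iff_norm_sub_tendsto_zero]
    have hbound : ∀ q : ℝ × F,
        ‖alexanderTrick g q.1 q.2 - y₀‖ ≤ max q.1 0 * M + ‖q.2 - y₀‖ := fun q =>
      (norm_sub_le_norm_sub_add_norm_sub _ q.2 _).trans
        (add_le_add_left (norm_alexanderTrick_sub_le hM q.1 q.2) _)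
    refine squeeze_zero (fun _ => norm_nonneg _) hbound ?_
    have hlim : Continuous fun q : ℝ × F => max q.1 0 * M + ‖q.2 - y₀‖ := by fun_prop
    simpa [max_eq_right hs₀] using hlim.tendsto (s₀, y₀)

end AlexanderTrick

theorem nonempty_image_closedBall_homeomorph {F X : Type*} [NormedAddCommGroup F]
    [NormedSpace ℝ F] [ProperSpace F] [TopologicalSpace X] [T2Space X] {g : F → X}
    (hg : Continuous g) (hinj : Injective g) {r : ℝ} (hr : 0 < r) :
    Nonempty (g '' closedBall 0 r ≃ₜ closedBall (0 : F) 1) := by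
  have : CompactSpace (closedBall (0 : F) 1) :=
    isCompact_iff_compactSpace.mp (isCompact_closedBall 0 1)
  let h : closedBall (0 : F) 1 → X := fun y => g (r • (y : F))
  have hemb : Topology.IsClosedEmbedding h :=
    (hg.comp ((continuous_const_smul r).comp continuous_subtype_val)).isClosedEmbedding
      fun y z hyz => Subtype.ext (smul_right_injective F hr.ne' (hinj hyz))
  have hrange : range h = g '' closedBall 0 r := by
    rw [show h = (g ∘ (r • ·)) ∘ Subtype.val from rfl, range_comp, Subtype.range_coe,
      image_comp, image_smul, _root_.smul_closedBall _ _ zero_le_one]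
    simp [abs_of_pos hr]
  exact ⟨(Homeomorph.setCongr hrange.symm).trans hemb.isEmbedding.toHomeomorph.symm⟩

section Stereographic

variable {E : Type*} [NormedAddCommGroup E] [InnerProductSpace ℝ E] {n : ℕ}
  [Fact (finrank ℝ E = n + 1)] (v : sphere (0 : E) 1)

theorem continuous_stereographic'_symm : Continuous (stereographic' n v).symm := by
  simpa [continuousOn_univ] using (stereographic' n v).continuousOn_symm

theorem stereographic'_symm_ne (y : EuclideanSpace ℝ (Fin n)) :
    (stereographic' n v).symm y ≠ v := by
  simpa using (stereographic' n v).map_target (x := y) (by simp)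

theorem stereographic'_right_inv (y : EuclideanSpace ℝ (Fin n)) :
    stereographic' n v ((stereographic' n v).symm y) = y :=
  (stereographic' n v).right_inv (by simp)

variable {v} in
theorem stereographic'_left_inv {x : sphere (0 : E) 1} (hx : x ≠ v) :
    (stereographic' n v).symm (stereographic' n v x) = x :=
  (stereographic' n v).left_inv (by simpa using hx)

theorem injective_stereographic'_symm : Injective (stereographic' n v).symm := fun y z h => by
  simpa [stereographic'_right_inv] using congrArg (stereographic' n v) h

theorem mem_stereographic'_symm_image_iff {A : Set (EuclideanSpace ℝ (Fin n))}
    {x : sphere (0 : E) 1} :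
    x ∈ (stereographic' n v).symm '' A ↔ x ≠ v ∧ stereographic' n v x ∈ A := by
  constructor
  · rintro ⟨y, hy, rfl⟩
    exact ⟨stereographic'_symm_ne v y, by rwa [stereographic'_right_inv]⟩
  · rintro ⟨hx, hxA⟩
    exact ⟨_, hxA, stereographic'_left_inv hx⟩

theorem stereographic'_apply_neg : stereographic' n v (-v) = 0 := by
  simp [stereographic', stereographic_apply_neg]

theorem stereographic'_symm_zero : (stereographic' n v).symm 0 = -v := by
  rw [← stereographic'_apply_neg v, stereographic'_left_inv (ne_neg_of_mem_unit_sphere ℝ v).symm]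

theorem stereographic'_neg_apply : stereographic' n (-v) v = 0 := by
  simpa using stereographic'_apply_neg (-v)

variable {v}

theorem norm_stereographic'_sq {x : sphere (0 : E) 1} (hx : x ≠ v) :
    ‖stereographic' n v x‖ ^ 2 = 4 * (1 + ⟪(v : E), x⟫) / (1 - ⟪(v : E), x⟫) := by
  have hv : ‖(v : E)‖ = 1 := norm_eq_of_mem_sphere v
  have hx1 : ‖(x : E)‖ = 1 := norm_eq_of_mem_sphere x
  have ht : ⟪(v : E), x⟫ < 1 :=
    (inner_lt_one_iff_real_of_norm_eq_one hv hx1).mpr fun h => hx (Subtype.ext h.symm)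
  have hproj : ‖(ℝ ∙ (v : E))ᗮ.orthogonalProjectionOnto (x : E)‖ ^ 2 = 1 - ⟪(v : E), x⟫ ^ 2 := by
    have := Submodule.norm_sq_eq_add_norm_sq_starProjection (x : E) (ℝ ∙ (v : E))
    rw [Submodule.starProjection_unit_singleton ℝ hv, norm_smul, hv, hx1, mul_one,
      Real.norm_eq_abs, sq_abs] at this
    change ‖(ℝ ∙ (v : E))ᗮ.starProjection (x : E)‖ ^ 2 = _
    linarith
  have hnorm : ‖stereographic' n v x‖ = ‖stereographic (norm_eq_of_mem_sphere v) x‖ := by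
    rw [stereographic', OpenPartialHomeomorph.trans_apply]
    exact (OrthonormalBasis.fromOrthogonalSpanSingleton n
      (ne_zero_of_mem_unit_sphere v)).repr.norm_map _
  rw [hnorm, stereographic_apply, norm_smul, mul_pow, hproj, Real.norm_eq_abs, sq_abs]
  have : (1 : ℝ) - ⟪(v : E), x⟫ ≠ 0 := by linarith
  field_simp
  ring

theorem norm_stereographic'_mul_norm_stereographic'_neg {x : sphere (0 : E) 1} (hx : x ≠ v)
    (hx' : x ≠ -v) : ‖stereographic' n v x‖ * ‖stereographic' n (-v) x‖ = 4 := by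
  have hx1 : ‖(x : E)‖ = 1 := norm_eq_of_mem_sphere x
  have ht : ⟪(v : E), x⟫ < 1 :=
    (inner_lt_one_iff_real_of_norm_eq_one (norm_eq_of_mem_sphere v) hx1).mpr
      fun h => hx (Subtype.ext h.symm)
  have ht' : ⟪((-v : sphere (0 : E) 1) : E), x⟫ < 1 :=
    (inner_lt_one_iff_real_of_norm_eq_one (norm_eq_of_mem_sphere _) hx1).mpr
      fun h => hx' (Subtype.ext h.symm)
  have h₁ := norm_stereographic'_sq (n := n) hx
  have h₂ := norm_stereographic'_sq (n := n) hx'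
  rw [coe_neg_sphere, inner_neg_left] at ht' h₂
  rw [← sq_eq_sq₀ (by positivity) (by norm_num), mul_pow, h₁, h₂]
  have : (1 : ℝ) - ⟪(v : E), x⟫ ≠ 0 := by linarith
  have : (1 : ℝ) - -⟪(v : E), x⟫ ≠ 0 := by linarith
  field_simp
  ring

theorem compl_stereographic'_symm_image_closedBall {r : ℝ} (hr : 0 < r) :
    ((stereographic' n (-v)).symm '' closedBall 0 r)ᶜ =
      (stereographic' n v).symm '' ball 0 (4 / r) := by
  ext x
  simp only [mem_compl_iff, mem_stereographic'_symm_image_iff, mem_closedBall_zero_iff,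
    mem_ball_zero_iff, not_and, not_le]
  rcases eq_or_ne x v with rfl | hxv
  · simp [stereographic'_neg_apply, hr.le, ne_neg_of_mem_unit_sphere ℝ x]
  rcases eq_or_ne x (-v) with rfl | hxv'
  · simp [stereographic'_apply_neg, hr, hxv]
  have h := norm_stereographic'_mul_norm_stereographic'_neg (n := n) hxv hxv'
  have hpos : 0 < ‖stereographic' n v x‖ := by
    refine (norm_nonneg _).lt_of_ne fun h0 => ?_
    rw [← h0, zero_mul] at h
    norm_num at h
  rw [lt_div_iff₀ hr, ← h, mul_lt_mul_iff_right₀ hpos]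
  simp [hxv, hxv']

end Stereographic

section StereographicConj

variable {E : Type*} [NormedAddCommGroup E] [InnerProductSpace ℝ E] {n : ℕ}
  [Fact (finrank ℝ E = n + 1)] (v : sphere (0 : E) 1)

open scoped Classical in
noncomputable def stereographicConj (g : EuclideanSpace ℝ (Fin n) → EuclideanSpace ℝ (Fin n)) :
    sphere (0 : E) 1 → sphere (0 : E) 1 :=
  fun x => if x = v then v else (stereographic' n v).symm (g (stereographic' n v x))

theorem stereographicConj_id : stereographicConj v (id : EuclideanSpace ℝ (Fin n) → _) = id := by
  ext1 x
  by_cases hx : x = v <;> simp [stereographicConj, hx]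

theorem stereographicConj_comp (g h : EuclideanSpace ℝ (Fin n) → EuclideanSpace ℝ (Fin n)) :
    stereographicConj v g ∘ stereographicConj v h = stereographicConj v (g ∘ h) := by
  ext1 x
  by_cases hx : x = v <;>
    simp [stereographicConj, hx, stereographic'_symm_ne]

/-- Continuity at the pole holds because, near `v`, every `g t` is the identity. -/
theorem continuous_stereographicConj_family {T : Type*} [TopologicalSpace T]
    {g : T → EuclideanSpace ℝ (Fin n) → EuclideanSpace ℝ (Fin n)}
    (hg : Continuous (uncurry g)) {R : ℝ} (hR : ∀ t y, R ≤ ‖y‖ → g t y = y) :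
    Continuous fun q : sphere (0 : E) 1 × T => stereographicConj v (g q.2) q.1 := by
  refine continuous_iff_continuousAt.mpr fun ⟨x₀, t₀⟩ => ?_
  rcases eq_or_ne x₀ v with rfl | hx₀
  · have hK : IsClosed ((stereographic' n x₀).symm '' closedBall 0 R) :=
      ((isCompact_closedBall 0 R).image (continuous_stereographic'_symm x₀)).isClosed
    refine continuousAt_fst.congr (eventuallyEq_of_mem
      ((hK.isOpen_compl.preimage continuous_fst).mem_nhds ?_) ?_)
    · simp [stereographic'_symm_ne]
    rintro ⟨x, t⟩ hx
    simp only [mem_preimage, mem_compl_iff, mem_stereographic'_symm_image_iff,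
      mem_closedBall_zero_iff, not_and, not_le] at hx
    by_cases hxv : x = x₀
    · simp [stereographicConj, hxv]
    · simp [stereographicConj, hxv, hR t _ (hx hxv).le, stereographic'_left_inv hxv]
  · have hcont : ContinuousAt
        (fun q : sphere (0 : E) 1 × T => (stereographic' n v).symm (g q.2 (stereographic' n v q.1)))
        (x₀, t₀) :=
      (continuous_stereographic'_symm v).continuousAt.comp <| hg.continuousAt.comp <|
        continuousAt_snd.prodMk
          (((stereographic' n v).continuousAt (by simpa using hx₀)).comp continuousAt_fst)
    refine hcont.congr (eventuallyEq_of_mem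
      ((isOpen_compl_singleton.preimage continuous_fst).mem_nhds hx₀) fun ⟨x, t⟩ hx => ?_)
    simp_all [stereographicConj]

theorem exists_homeomorph_coe_eq_stereographicConj (G : EuclideanSpace ℝ (Fin n) ≃ₜ
    EuclideanSpace ℝ (Fin n)) {R : ℝ} (hG : ∀ y, R ≤ ‖y‖ → G y = y) :
    ∃ e : sphere (0 : E) 1 ≃ₜ sphere (0 : E) 1, ⇑e = stereographicConj v G := by
  have hGs : ∀ y, R ≤ ‖y‖ → G.symm y = y := fun y hy => G.symm_apply_eq.mpr (hG y hy).symm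
  have hcont : ∀ g : EuclideanSpace ℝ (Fin n) ≃ₜ EuclideanSpace ℝ (Fin n),
      (∀ y, R ≤ ‖y‖ → g y = y) → Continuous (stereographicConj (E := E) v g) := fun g hg =>
    (continuous_stereographicConj_family v (g := fun _ : Unit => ⇑g)
      (g.continuous.comp continuous_snd) fun _ => hg).comp
      (continuous_id.prodMk continuous_const : Continuous fun x : sphere (0 : E) 1 => (x, ()))
  refine ⟨{ toFun := stereographicConj v G
            invFun := stereographicConj v G.symm
            left_inv := congrFun (show stereographicConj v G.symm ∘ stereographicConj v G = id by
              rw [stereographicConj_comp, G.symm_comp_self, stereographicConj_id])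
            right_inv := congrFun (show stereographicConj v G ∘ stereographicConj v G.symm = id by
              rw [stereographicConj_comp, G.self_comp_symm, stereographicConj_id])
            continuous_toFun := hcont G hG
            continuous_invFun := hcont G.symm hGs }, rfl⟩

theorem exists_homeomorph_stereographicConj_eq (f : sphere (0 : E) 1 ≃ₜ sphere (0 : E) 1)
    (hfv : f v = v) :
    ∃ G : EuclideanSpace ℝ (Fin n) ≃ₜ EuclideanSpace ℝ (Fin n), ⇑f = stereographicConj v G := by
  have hne : ∀ g : sphere (0 : E) 1 ≃ₜ sphere (0 : E) 1, g v = v → ∀ {x}, x ≠ v → g x ≠ v :=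
    fun g hg _ hx => hg ▸ g.injective.ne hx
  have hcont : ∀ g : sphere (0 : E) 1 ≃ₜ sphere (0 : E) 1, g v = v →
      Continuous fun y => stereographic' n v (g ((stereographic' n v).symm y)) := fun g hg =>
    (stereographic' n v).continuousOn.comp_continuous
      (g.continuous.comp (continuous_stereographic'_symm v))
      fun y => by simpa using hne g hg (stereographic'_symm_ne v y)
  have hfsv : f.symm v = v := f.symm_apply_eq.mpr hfv.symm
  refine ⟨{ toFun y := stereographic' n v (f ((stereographic' n v).symm y))
            invFun y := stereographic' n v (f.symm ((stereographic' n v).symm y))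
            left_inv y := by
              simp [stereographic'_left_inv (hne f hfv (stereographic'_symm_ne v y))]
            right_inv y := by
              simp [stereographic'_left_inv (hne f.symm hfsv (stereographic'_symm_ne v y))]
            continuous_toFun := hcont f hfv
            continuous_invFun := hcont f.symm hfsv }, funext fun x => ?_⟩
  by_cases hx : x = v
  · simp [stereographicConj, hx, hfv]
  · simp [stereographicConj, hx, stereographic'_left_inv hx, stereographic'_left_inv (hne f hfv hx)]

theorem exists_isotopy_refl_of_fixes_outside_ball (f : sphere (0 : E) 1 ≃ₜ sphere (0 : E) 1)
    (hfv : f v = v) {R : ℝ}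
    (hR : ∀ y, R ≤ ‖y‖ → f ((stereographic' n v).symm y) = (stereographic' n v).symm y) :
    ∃ H : sphere (0 : E) 1 × Icc (0 : ℝ) 1 → sphere (0 : E) 1,
      Continuous H ∧ (∀ x, H (x, 0) = f x) ∧ (∀ x, H (x, 1) = x) ∧
      ∀ t : Icc (0 : ℝ) 1, ∃ e : sphere (0 : E) 1 ≃ₜ sphere (0 : E) 1, ∀ x, e x = H (x, t) := by
  obtain ⟨G, hfG⟩ := exists_homeomorph_stereographicConj_eq (n := n) v f hfv
  have hG : ∀ y, R ≤ ‖y‖ → G y = y := fun y hy => by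
    have h := congrFun hfG ((stereographic' n v).symm y)
    simp only [stereographicConj, if_neg (stereographic'_symm_ne v y), stereographic'_right_inv,
      hR y hy] at h
    exact (injective_stereographic'_symm v h).symm
  obtain ⟨M, hM⟩ := exists_forall_norm_sub_le G.continuous hG
  have hK : ∀ (t : Icc (0 : ℝ) 1) y, R ≤ ‖y‖ → alexanderTrick G (1 - t) y = y := fun t _ hy =>
    alexanderTrick_apply_of_le_norm hG (by linarith [t.2.1]) hy
  refine ⟨fun q => stereographicConj v (alexanderTrick G (1 - q.2)) q.1, ?_, ?_, ?_, fun t => ?_⟩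
  · exact continuous_stereographicConj_family v
      (g := fun t : Icc (0 : ℝ) 1 => ⇑(alexanderTrick G (1 - t)))
      ((continuous_alexanderTrick hM).comp
        (f := fun q : Icc (0 : ℝ) 1 × EuclideanSpace ℝ (Fin n) => (1 - (q.1 : ℝ), q.2))
        (by fun_prop)) hK
  · simp [alexanderTrick_one, hfG]
  · simp [alexanderTrick_of_nonpos, stereographicConj_id]
  · obtain ⟨e, he⟩ := exists_homeomorph_coe_eq_stereographicConj v _ (hK t)
    exact ⟨e, fun x => congrFun he x⟩

end StereographicConj

/-- If a homeomorphism `f` of `Sⁿ` is the identity on a nonempty open set `U`, then there is a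
closed embedded ball `D ⊆ U` fixed pointwise by `f` whose complement has closure an embedded
ball, `f` restricts to that complementary ball fixing its boundary, and consequently `f` is
isotopic to the identity of `Sⁿ`. -/
theorem homeo_fixing_open_set_isotopic_to_id (n : ℕ)
    (f : (sphere (0 : EuclideanSpace ℝ (Fin (n + 1))) 1) ≃ₜ
      (sphere (0 : EuclideanSpace ℝ (Fin (n + 1))) 1))
    (U : Set (sphere (0 : EuclideanSpace ℝ (Fin (n + 1))) 1))
    (hU : IsOpen U) (hUne : U.Nonempty) (hfix : ∀ x ∈ U, f x = x) :
    (∃ D : Set (sphere (0 : EuclideanSpace ℝ (Fin (n + 1))) 1),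
      IsClosed D ∧ D ⊆ U ∧ (∀ x ∈ D, f x = x) ∧
      Nonempty (D ≃ₜ (closedBall (0 : EuclideanSpace ℝ (Fin n)) 1)) ∧
      Nonempty ((closure Dᶜ : Set (sphere (0 : EuclideanSpace ℝ (Fin (n + 1))) 1)) ≃ₜ
        (closedBall (0 : EuclideanSpace ℝ (Fin n)) 1)) ∧
      Set.MapsTo f (closure Dᶜ) (closure Dᶜ) ∧
      (∀ x ∈ frontier D, f x = x)) ∧
    ∃ H : (sphere (0 : EuclideanSpace ℝ (Fin (n + 1))) 1) × (Set.Icc (0:ℝ) 1) →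
        (sphere (0 : EuclideanSpace ℝ (Fin (n + 1))) 1),
      Continuous H ∧ (∀ x, H (x, 0) = f x) ∧ (∀ x, H (x, 1) = x) ∧
      (∀ t : Set.Icc (0:ℝ) 1,
        ∃ e : (sphere (0 : EuclideanSpace ℝ (Fin (n + 1))) 1) ≃ₜ
          (sphere (0 : EuclideanSpace ℝ (Fin (n + 1))) 1), ∀ x, e x = H (x, t)) := by
  have : Fact (finrank ℝ (EuclideanSpace ℝ (Fin (n + 1))) = n + 1) := ⟨finrank_euclideanSpace_fin⟩
  obtain ⟨p, hp⟩ := hUne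
  obtain ⟨r, hr, hrU⟩ : ∃ r > 0, closedBall 0 r ⊆ (stereographic' n (-p)).symm ⁻¹' U :=
    nhds_basis_closedBall.mem_iff.mp <|
      (continuous_stereographic'_symm (-p)).continuousAt.preimage_mem_nhds
        (by simpa [stereographic'_symm_zero] using hU.mem_nhds hp)
  set D := (stereographic' n (-p)).symm '' closedBall 0 r
  have hDU : D ⊆ U := image_subset_iff.mpr hrU
  have hDfix : ∀ x ∈ D, f x = x := fun x hx => hfix x (hDU hx)
  have hD : IsClosed D :=
    ((isCompact_closedBall 0 r).image (continuous_stereographic'_symm _)).isClosed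
  have hDc : Dᶜ = (stereographic' n p).symm '' ball 0 (4 / r) :=
    compl_stereographic'_symm_image_closedBall hr
  refine ⟨⟨D, hD, hDU, hDfix, nonempty_image_closedBall_homeomorph
    (continuous_stereographic'_symm _) (injective_stereographic'_symm _) hr, ?_, ?_,
    fun x hx => hDfix x (hD.frontier_subset hx)⟩, ?_⟩
  · rw [hDc, ← image_closure_of_isCompact isBounded_ball.isCompact_closure
      (continuous_stereographic'_symm p).continuousOn, closure_ball _ (by positivity)]
    exact nonempty_image_closedBall_homeomorph (continuous_stereographic'_symm _)
      (injective_stereographic'_symm _) (by positivity)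
  · exact (((bijOn_id D).congr fun x hx => (hDfix x hx).symm).compl f.bijective).mapsTo.closure
      f.continuous
  · refine exists_isotopy_refl_of_fixes_outside_ball (n := n) p f
      (hDfix p ⟨0, by simp [hr.le], by simp [stereographic'_symm_zero]⟩) (R := 4 / r)
      fun y hy => hDfix _ (of_not_not fun hyD => ?_)
    rw [← mem_compl_iff, hDc, mem_stereographic'_symm_image_iff, stereographic'_right_inv,
      mem_ball_zero_iff] at hyD
    linarith [hyD.2]
end
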